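/- arXiv:2009.11386 — 6 statements merged into one kernel-verified Lean document; each statement's English description precedes it below -/
import Mathlib

section
/- Let M ≥ 2 be a natural number and let F : (Fin M → ℝ) → (Fin M → ℝ) be continuous. Assume the following strict monotonicity property: for every t : Fin M → ℝ, every index i, and every ε > 0, if t' is obtained from t by decreasing the i-th coordinate by ε (i.e. t' i = t i − ε and t' j = t j for j ≠ i), then F t' i > F t i and F t' j < F t j for every j ≠ i. If t* : Fin M → ℝ has all coordinates strictly positive and minimizes the function t ↦ ⨆ i, F t i over the set {t : Fin M → ℝ | ∀ i, t i > 0}, then F t* i = F t* j for all indices i, j. -/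
/-- Abstract form of the paper's Proposition 4: at a positive minimizer `t*` of the
maximum peak uncertainty `t ↦ ⨆ i, F t i` over the positive orthant, all the peak
uncertainties `F t* i` coincide, provided `F` is continuous and decreasing the `i`-th
observation time strictly increases peak `i` and strictly decreases all other peaks. -/
theorem equal_peaks_at_minimizer (M : ℕ) (hM : 2 ≤ M)
    (F : (Fin M → ℝ) → (Fin M → ℝ)) (hF : Continuous F)
    (hmono : ∀ (t : Fin M → ℝ) (i : Fin M) (ε : ℝ), 0 < ε →
      ∀ t' : Fin M → ℝ, (t' i = t i - ε ∧ ∀ j : Fin M, j ≠ i → t' j = t j) →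
        F t' i > F t i ∧ ∀ j : Fin M, j ≠ i → F t' j < F t j)
    (tstar : Fin M → ℝ) (htpos : ∀ i, tstar i > 0)
    (hmin : ∀ t : Fin M → ℝ, (∀ i, t i > 0) →
      (⨆ i, F tstar i) ≤ ⨆ i, F t i) :
    ∀ i j : Fin M, F tstar i = F tstar j := by
  have hMpos : 0 < M := by omega
  haveI : Nonempty (Fin M) := ⟨⟨0, hMpos⟩⟩
  set s : ℝ := ⨆ k, F tstar k with hs
  have hbdd : BddAbove (Set.range (F tstar)) := (Set.finite_range _).bddAbove
  have key : ∀ i, F tstar i = s := by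
    intro i
    by_contra hne
    have hlt : F tstar i < s := lt_of_le_of_ne (le_ciSup hbdd i) hne
    -- continuity of ε ↦ F (update tstar i (tstar i - ε)) i
    have hg : Continuous fun ε : ℝ => F (Function.update tstar i (tstar i - ε)) i := by
      exact (continuous_apply i).comp
        (hF.comp (continuous_const.update i (continuous_const.sub continuous_id)))
    have h0 : (fun ε : ℝ => F (Function.update tstar i (tstar i - ε)) i) 0 < s := by
      simpa using hlt
    have hev : ∀ᶠ ε : ℝ in nhds 0,
        F (Function.update tstar i (tstar i - ε)) i < s :=
      (hg.continuousAt (x := 0)).eventually_lt_const h0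
    rcases Metric.eventually_nhds_iff.mp hev with ⟨δ, hδ, hδball⟩
    set ε : ℝ := min (δ / 2) (tstar i / 2) with hε
    have hεpos : 0 < ε := lt_min (by linarith) (by linarith [htpos i])
    have hεδ : |ε - 0| < δ := by
      rw [sub_zero, abs_of_pos hεpos]
      calc ε ≤ δ / 2 := min_le_left _ _
        _ < δ := by linarith
    set t' : Fin M → ℝ := Function.update tstar i (tstar i - ε) with ht'
    have ht'i : t' i = tstar i - ε := Function.update_self i _ tstar
    have ht'j : ∀ j : Fin M, j ≠ i → t' j = tstar j := fun j hj =>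
      Function.update_of_ne hj _ tstar
    have ht'pos : ∀ j, t' j > 0 := by
      intro j
      by_cases hji : j = i
      · subst hji
        rw [ht'i]
        have : ε ≤ tstar j / 2 := min_le_right _ _
        linarith [htpos j]
      · rw [ht'j j hji]; exact htpos j
    obtain ⟨hFi, hFj⟩ := hmono tstar i ε hεpos t' ⟨ht'i, ht'j⟩
    -- F t' i < s
    have hFi' : F t' i < s := hδball hεδ
    -- each coordinate of F t' is < s
    have hall : ∀ k, F t' k < s := by
      intro k
      by_cases hki : k = i
      · subst hki; exact hFi'
      · exact lt_of_lt_of_le (hFj k hki) (le_ciSup hbdd k)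
    -- finite max attained
    obtain ⟨k, hk⟩ := Finite.exists_max (F t')
    have hsup : (⨆ k, F t' k) ≤ F t' k := ciSup_le hk
    have := hmin t' ht'pos
    linarith [hall k]
  intro i j
  rw [key i, key j]
end

section
/- Let M ≥ 1 and let f : Fin M → ℝ → ℝ be a family of functions such that each f i is strictly antitone (strictly decreasing). Let t* : Fin M → ℝ and c : ℝ satisfy f i (t* i) = c for all i (an equalized allocation). Then for every t : Fin M → ℝ with ∑ i, t i = ∑ i, t* i and t ≠ t*, one has (⨆ i, f i (t i)) > c. Consequently t* is the unique minimizer of t ↦ ⨆ i, f i (t i) over all t : Fin M → ℝ with ∑ i, t i = ∑ i, t* i. -/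
/-- Abstract form of the paper's optimality result for equalized allocations: if each
peak uncertainty `f i` is strictly decreasing in the observation time and the allocation
`t*` equalizes all peaks at level `c`, then any other allocation with the same total
observation time has a strictly larger maximal peak; consequently `t*` is the unique
minimizer of the minimax cost over allocations with that total budget. -/
theorem equalized_allocation_unique_minimizer (M : ℕ) (hM : 1 ≤ M)
    (f : Fin M → ℝ → ℝ) (hf : ∀ i, StrictAnti (f i))
    (tstar : Fin M → ℝ) (c : ℝ) (heq : ∀ i, f i (tstar i) = c) :
    (∀ t : Fin M → ℝ, (∑ i, t i) = (∑ i, tstar i) → t ≠ tstar →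
      (⨆ i, f i (t i)) > c) ∧
    (∀ t : Fin M → ℝ, (∑ i, t i) = (∑ i, tstar i) →
      (∀ s : Fin M → ℝ, (∑ i, s i) = (∑ i, tstar i) →
        (⨆ i, f i (t i)) ≤ ⨆ i, f i (s i)) → t = tstar) := by
  have hne : Nonempty (Fin M) := ⟨⟨0, hM⟩⟩
  have main : ∀ t : Fin M → ℝ, (∑ i, t i) = (∑ i, tstar i) → t ≠ tstar →
      (⨆ i, f i (t i)) > c := by
    intro t hsum hne'
    -- some coordinate must be strictly smaller
    have hlt : ∃ i, t i < tstar i := by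
      by_contra h
      push_neg at h
      apply hne'
      funext i
      by_contra hti
      have hstrict : tstar i < t i := lt_of_le_of_ne (h i) (Ne.symm hti)
      have : (∑ i, tstar i) < ∑ i, t i :=
        Finset.sum_lt_sum (fun j _ => h j) ⟨i, Finset.mem_univ i, hstrict⟩
      linarith [hsum]
    obtain ⟨i, hi⟩ := hlt
    have h1 : c < f i (t i) := by
      have := hf i hi
      rw [heq i] at this
      exact this
    have h2 : f i (t i) ≤ ⨆ j, f j (t j) :=
      le_ciSup (f := fun j => f j (t j)) (Set.Finite.bddAbove (Set.finite_range _)) i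
    linarith
  refine ⟨main, ?_⟩
  intro t hsum hmin
  by_contra hne'
  have h1 := main t hsum hne'
  have h2 := hmin tstar rfl
  have h3 : (⨆ i, f i (tstar i)) = c := by
    have : (fun i => f i (tstar i)) = fun _ => c := funext heq
    rw [this, ciSup_const]
  rw [h3] at h2
  linarith
end

section
/- Let T > 0 and let p : ℝ → ℝ be continuous with p (t + T) = p t for all t ∈ ℝ. Let f : ℝ → ℝ be a function such that f t − p t tends to 0 as t → ∞. Then limsup_{t→∞} f t = sSup (p '' Set.Icc 0 T). -/
open Filter

/-- If `f` converges to a continuous `T`-periodic function `p` as `t → ∞`, then the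
limit superior of `f` at infinity equals the supremum of `p` over one period `[0, T]`. -/
theorem limsup_eq_sSup_of_tendsto_periodic (T : ℝ) (hT : 0 < T)
    (p : ℝ → ℝ) (hp : Continuous p) (hper : ∀ t : ℝ, p (t + T) = p t)
    (f : ℝ → ℝ) (hf : Tendsto (fun t => f t - p t) atTop (nhds 0)) :
    limsup f atTop = sSup (p '' Set.Icc 0 T) := by
  have hper' : Function.Periodic p T := hper
  -- the maximum of p on [0, T]
  have hcpt : IsCompact (Set.Icc (0:ℝ) T) := isCompact_Icc
  have hne : (Set.Icc (0:ℝ) T).Nonempty := Set.nonempty_Icc.2 hT.le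
  obtain ⟨t₀, ht₀, hmax⟩ := hcpt.exists_isMaxOn hne hp.continuousOn
  set M := p t₀ with hM
  have hsup : sSup (p '' Set.Icc 0 T) = M := by
    apply le_antisymm
    · apply csSup_le ((hne.image p))
      rintro x ⟨s, hs, rfl⟩
      exact hmax hs
    · exact le_csSup (hcpt.image hp).bddAbove ⟨t₀, ht₀, rfl⟩
  rw [hsup]
  -- p t ≤ M for all t
  have hple : ∀ t : ℝ, p t ≤ M := by
    intro t
    have h1 : p (toIcoMod hT 0 t) = p t := by
      rw [toIcoMod, zsmul_eq_mul, hper'.sub_int_mul_eq]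
    have h2 : toIcoMod hT 0 t ∈ Set.Icc 0 T := by
      have := toIcoMod_mem_Ico hT 0 t
      simp only [zero_add] at this
      exact ⟨this.1, this.2.le⟩
    rw [← h1]
    exact hmax h2
  -- f is eventually bounded above and below
  have hev : ∀ ε > (0:ℝ), ∀ᶠ t in atTop, |f t - p t| < ε := by
    intro ε hε
    have := Metric.tendsto_nhds.1 hf ε hε
    simpa [Real.dist_eq] using this
  have hbdd : atTop.IsBoundedUnder (· ≤ ·) f := by
    refine ⟨M + 1, ?_⟩
    rw [Filter.eventually_map]
    filter_upwards [hev 1 one_pos] with t ht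
    have := abs_lt.1 ht
    linarith [hple t]
  apply le_antisymm
  · -- limsup f ≤ M
    obtain ⟨t₁, ht₁, hmin⟩ := hcpt.exists_isMinOn hne hp.continuousOn
    have hpge : ∀ t : ℝ, p t₁ ≤ p t := by
      intro t
      have h1 : p (toIcoMod hT 0 t) = p t := by
        rw [toIcoMod, zsmul_eq_mul, hper'.sub_int_mul_eq]
      have h2 : toIcoMod hT 0 t ∈ Set.Icc 0 T := by
        have := toIcoMod_mem_Ico hT 0 t
        simp only [zero_add] at this
        exact ⟨this.1, this.2.le⟩
      rw [← h1]
      exact hmin h2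
    have hcob : atTop.IsCoboundedUnder (· ≤ ·) f := by
      apply Filter.isCoboundedUnder_le_of_eventually_le (l := atTop) (x := p t₁ - 1)
      filter_upwards [hev 1 one_pos] with t ht
      have := abs_lt.1 ht
      linarith [hpge t]
    refine le_of_forall_pos_le_add fun ε hε => ?_
    apply limsup_le_of_le hcob
    filter_upwards [hev ε hε] with t ht
    have := abs_lt.1 ht
    linarith [hple t]
  · -- M ≤ limsup f
    refine le_of_forall_pos_le_add fun ε hε => ?_
    have hfreq : ∃ᶠ t in atTop, M - ε ≤ f t := by
      rw [frequently_atTop]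
      intro a
      -- choose n with t₀ + n*T ≥ a and |f - p| < ε at that point
      obtain ⟨b, hb⟩ := (eventually_atTop).1 (hev ε hε)
      obtain ⟨n, hn⟩ := exists_nat_ge ((max a b - t₀) / T)
      refine ⟨t₀ + n * T, ?_, ?_⟩
      · have : max a b - t₀ ≤ n * T := by
          rw [div_le_iff₀ hT] at hn; linarith
        have := le_max_left a b
        linarith
      · have hbig : b ≤ t₀ + n * T := by
          have : max a b - t₀ ≤ n * T := by
            rw [div_le_iff₀ hT] at hn; linarith
          have := le_max_right a b
          linarith
        have habs := hb _ hbig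
        have hpeq : p (t₀ + n * T) = M := by
          have := (hper'.nat_mul n) t₀
          simpa using this
        have := abs_lt.1 habs
        rw [hpeq] at this
        linarith
    have := le_limsup_of_frequently_le hfreq hbdd
    linarith
end

section
/- Let n be a natural number, T > 0, and let Ω̄ : ℝ → Matrix (Fin n) (Fin n) ℝ be continuous with Ω̄ (t + T) = Ω̄ t for all t. Let Ω : ℝ → Matrix (Fin n) (Fin n) ℝ satisfy ‖Ω t − Ω̄ t‖ → 0 as t → ∞ (for the operator norm, or any fixed norm on matrices), and let g : ℝ → ℝ be continuous and monotone (nondecreasing). Then limsup_{t→∞} g ‖Ω t‖ = sSup ((fun t => g ‖Ω̄ t‖) '' Set.Icc 0 T). -/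
open Filter Matrix

attribute [local instance] Matrix.normedAddCommGroup

/-- If the covariance `Ω` converges (in norm) to a continuous `T`-periodic steady-state
covariance `Ω̄` and `g` is a continuous nondecreasing weighting function, then the
infinite-horizon cost `limsup_{t→∞} g ‖Ω t‖` equals the maximum of `g ‖Ω̄ t‖` over one
period `[0, T]`. -/
theorem limsup_cost_eq_sSup_periodic (n : ℕ) (T : ℝ) (hT : 0 < T)
    (Ωbar : ℝ → Matrix (Fin n) (Fin n) ℝ) (hcont : Continuous Ωbar)
    (hper : ∀ t : ℝ, Ωbar (t + T) = Ωbar t)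
    (Ω : ℝ → Matrix (Fin n) (Fin n) ℝ)
    (hconv : Tendsto (fun t => ‖Ω t - Ωbar t‖) atTop (nhds 0))
    (g : ℝ → ℝ) (hg : Continuous g) (hmono : Monotone g) :
    limsup (fun t => g ‖Ω t‖) atTop = sSup ((fun t => g ‖Ωbar t‖) '' Set.Icc 0 T) := by
  have hper' : Function.Periodic Ωbar T := hper
  set F : ℝ → ℝ := fun t => g ‖Ωbar t‖ with hF
  have hFcont : Continuous F := hg.comp hcont.norm
  obtain ⟨t0, ht0mem, ht0max⟩ := (isCompact_Icc (a := (0:ℝ)) (b := T)).exists_isMaxOn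
      (Set.nonempty_Icc.mpr hT.le) hFcont.continuousOn
  set M := F t0 with hM
  have hsSup : sSup (F '' Set.Icc 0 T) = M := by
    apply IsGreatest.csSup_eq
    exact ⟨⟨t0, ht0mem, rfl⟩, by rintro y ⟨s, hs, rfl⟩; exact ht0max hs⟩
  rw [hsSup]
  -- F t ≤ M for every real t, by periodicity
  have hFle : ∀ t, F t ≤ M := by
    intro t
    obtain ⟨s, hs, hfs⟩ := hper'.exists_mem_Ico₀ hT t
    calc F t = F s := by simp only [hF]; rw [hfs]
      _ ≤ M := ht0max (Set.Ico_subset_Icc_self hs)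
  -- global norm bound on Ωbar
  obtain ⟨s0, hs0mem, hs0max⟩ := (isCompact_Icc (a := (0:ℝ)) (b := T)).exists_isMaxOn
      (Set.nonempty_Icc.mpr hT.le) hcont.norm.continuousOn
  set C := ‖Ωbar s0‖ with hC
  have hCbound : ∀ t, ‖Ωbar t‖ ≤ C := by
    intro t
    obtain ⟨s, hs, hfs⟩ := hper'.exists_mem_Ico₀ hT t
    rw [hfs]; exact hs0max (Set.Ico_subset_Icc_self hs)
  -- uniform continuity of g on a compact interval
  have hucg : UniformContinuousOn g (Set.Icc (-1 : ℝ) (C + 1)) :=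
    isCompact_Icc.uniformContinuousOn_of_continuous hg.continuousOn
  rw [Metric.uniformContinuousOn_iff] at hucg
  set d : ℝ → ℝ := fun t => ‖Ω t - Ωbar t‖ with hd
  have hd0 : ∀ t, 0 ≤ d t := fun t => norm_nonneg _
  have hsmall : ∀ η : ℝ, 0 < η → ∀ᶠ t in atTop, d t < η := by
    intro η hη
    exact hconv.eventually (eventually_lt_nhds hη)
  -- norm bounds on Ω
  have hΩub : ∀ t, ‖Ω t‖ ≤ ‖Ωbar t‖ + d t := by
    intro t
    calc ‖Ω t‖ = ‖Ωbar t + (Ω t - Ωbar t)‖ := by congr 1; abel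
      _ ≤ ‖Ωbar t‖ + d t := norm_add_le _ _
  have hΩlb : ∀ t, ‖Ωbar t‖ - d t ≤ ‖Ω t‖ := by
    intro t
    have := norm_sub_norm_le (Ωbar t) (Ω t)
    rw [norm_sub_rev] at this
    linarith
  -- boundedness facts for limsup
  have hbdd : IsBoundedUnder (· ≤ ·) atTop (fun t => g ‖Ω t‖) := by
    refine ⟨g (C + 1), ?_⟩
    rw [eventually_map]
    filter_upwards [hsmall 1 one_pos] with t ht
    exact hmono (le_trans (hΩub t) (by linarith [hCbound t]))
  have hcobdd : IsCoboundedUnder (· ≤ ·) atTop (fun t => g ‖Ω t‖) := by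
    exact isCoboundedUnder_le_of_le atTop (x := g 0) fun t => hmono (norm_nonneg _)
  apply le_antisymm
  · -- limsup ≤ M
    apply le_of_forall_pos_le_add
    intro ε hε
    obtain ⟨δ, hδ, hδ'⟩ := hucg ε hε
    apply limsup_le_of_le hcobdd
    filter_upwards [hsmall (min δ 1) (lt_min hδ one_pos)] with t ht
    have hdt1 : d t < 1 := lt_of_lt_of_le ht (min_le_right _ _)
    have hdtδ : d t < δ := lt_of_lt_of_le ht (min_le_left _ _)
    have hx : ‖Ωbar t‖ + d t ∈ Set.Icc (-1 : ℝ) (C + 1) := by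
      constructor
      · have := norm_nonneg (Ωbar t); linarith [hd0 t]
      · linarith [hCbound t]
    have hy : ‖Ωbar t‖ ∈ Set.Icc (-1 : ℝ) (C + 1) := by
      constructor
      · have := norm_nonneg (Ωbar t); linarith
      · linarith [hCbound t]
    have hdist : dist (‖Ωbar t‖ + d t) ‖Ωbar t‖ < δ := by
      rw [Real.dist_eq]
      rw [show ‖Ωbar t‖ + d t - ‖Ωbar t‖ = d t by ring]
      rw [abs_of_nonneg (hd0 t)]
      exact hdtδ
    have := hδ' _ hx _ hy hdist
    rw [Real.dist_eq, abs_sub_lt_iff] at this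
    have h1 : g ‖Ω t‖ ≤ g (‖Ωbar t‖ + d t) := hmono (hΩub t)
    have h2 : g ‖Ωbar t‖ ≤ M := hFle t
    linarith [this.1]
  · -- M ≤ limsup
    apply le_of_forall_pos_le_add
    intro ε hε
    obtain ⟨δ, hδ, hδ'⟩ := hucg ε hε
    rw [← sub_le_iff_le_add]
    apply le_limsup_of_frequently_le _ hbdd
    rw [frequently_atTop]
    intro a
    obtain ⟨N, hN⟩ := eventually_atTop.mp (hsmall (min δ 1) (lt_min hδ one_pos))
    set k : ℕ := ⌈(max a N - t0) / T⌉₊ with hk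
    set t : ℝ := t0 + k * T with ht
    have hge : max a N ≤ t := by
      have h1 : (max a N - t0) / T ≤ (k : ℝ) := Nat.le_ceil _
      have h2 : max a N - t0 ≤ k * T := by
        rw [div_le_iff₀ hT] at h1; linarith
      simp only [ht]; linarith
    refine ⟨t, le_trans (le_max_left _ _) hge, ?_⟩
    have hperk : Ωbar t = Ωbar t0 := (hper'.nat_mul k) t0
    have hdt := hN t (le_trans (le_max_right _ _) hge)
    have hdt1 : d t < 1 := lt_of_lt_of_le hdt (min_le_right _ _)
    have hdtδ : d t < δ := lt_of_lt_of_le hdt (min_le_left _ _)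
    have hx : ‖Ωbar t0‖ - d t ∈ Set.Icc (-1 : ℝ) (C + 1) := by
      constructor
      · have := norm_nonneg (Ωbar t0); linarith
      · linarith [hCbound t0, hd0 t]
    have hy : ‖Ωbar t0‖ ∈ Set.Icc (-1 : ℝ) (C + 1) := by
      constructor
      · have := norm_nonneg (Ωbar t0); linarith
      · linarith [hCbound t0]
    have hdist : dist (‖Ωbar t0‖ - d t) ‖Ωbar t0‖ < δ := by
      rw [Real.dist_eq]
      rw [show ‖Ωbar t0‖ - d t - ‖Ωbar t0‖ = -(d t) by ring]
      rw [abs_neg, abs_of_nonneg (hd0 t)]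
      exact hdtδ
    have habs := hδ' _ hx _ hy hdist
    rw [Real.dist_eq, abs_sub_lt_iff] at habs
    have h1 : g (‖Ωbar t0‖ - d t) ≤ g ‖Ω t‖ := by
      apply hmono
      calc ‖Ωbar t0‖ - d t = ‖Ωbar t‖ - d t := by rw [hperk]
        _ ≤ ‖Ω t‖ := hΩlb t
    have hMeq : M = g ‖Ωbar t0‖ := rfl
    linarith [habs.2]
end

section
/- Let M ≥ 1 and let x : Fin M → ℝ → ℝ be a family of continuously differentiable functions with x i r > 0 for all i and r. Define the geometric mean G r := (∏ i, x i r) ^ (1 / M : ℝ). Suppose there are continuous functions c : Fin M → ℝ → ℝ with c i r > 0 for all i, r, such that for all i and r, deriv (x i) r = −(c i r) * Real.log (x i r / G r). Then the function r ↦ ⨆ i, x i r is antitone, the function r ↦ ⨅ i, x i r is monotone, and consequently the function r ↦ (⨆ i, x i r) − (⨅ i, x i r) is antitone. -/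
/-!
At a time `t`, an index `i` attaining the maximum of the `x j t` lies above their geometric mean
`G t`, so `log (x i t / G t) ≥ 0` and `x i` is nonincreasing there; symmetrically, an index
attaining the minimum is nondecreasing. A Dini-derivative argument turns this into monotonicity
of the envelopes: just to the right of `t`, the active indices grow with slope less than any
`r > 0`, while the inactive ones stay strictly below the maximum by continuity, so the upper
right Dini derivative of `t ↦ ⨆ i, x i t` is nonpositive everywhere.
-/

open Filter Set Topology

theorem slope_lt_iff_lt_add_mul {f : ℝ → ℝ} {t z r : ℝ} (htz : t < z) :
    slope f t z < r ↔ f z < f t + r * (z - t) := by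
  rw [slope_def_field, div_lt_iff₀ (sub_pos.2 htz)]
  constructor <;> intro h <;> linarith

theorem antitone_of_frequently_slope_lt {f : ℝ → ℝ} (hf : Continuous f)
    (hslope : ∀ t r, 0 < r → ∃ᶠ z in 𝓝[>] t, slope f t z < r) : Antitone f := fun a _ hab =>
  image_le_of_liminf_slope_right_le_deriv_boundary hf.continuousOn (B := fun _ => f a) (B' := 0)
    le_rfl continuousOn_const (fun _ _ => hasDerivWithinAt_const _ _ _)
    (fun t _ r hr => hslope t r hr) ⟨hab, le_rfl⟩

theorem Real.iInf_eq_neg_iSup_neg {ι : Sort*} (f : ι → ℝ) : ⨅ i, f i = -⨆ i, -f i := by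
  rw [iInf, iSup, Real.sInf_def, Set.neg_range]

section FiniteEnvelope

variable {ι : Type*} [Finite ι] {f : ι → ℝ → ℝ}

theorem continuous_ciSup [Nonempty ι] (hf : ∀ i, Continuous (f i)) :
    Continuous fun s => ⨆ i, f i s := by
  cases nonempty_fintype ι
  simpa only [Finset.sup'_univ_eq_ciSup] using
    Continuous.finset_sup'_apply Finset.univ_nonempty fun i _ => hf i

theorem eventually_slope_ciSup_lt [Nonempty ι] (hf : ∀ i, Differentiable ℝ (f i))
    (hmax : ∀ t i, (∀ j, f j t ≤ f i t) → deriv (f i) t ≤ 0) {t r : ℝ} (hr : 0 < r) :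
    ∀ᶠ z in 𝓝[>] t, slope (fun s => ⨆ i, f i s) t z < r := by
  have hbdd : ∀ s, BddAbove (range fun i => f i s) := fun s => (finite_range _).bddAbove
  have below : ∀ i, ∀ᶠ z in 𝓝[>] t, f i z < (⨆ j, f j t) + r * (z - t) := by
    intro i
    by_cases hi : f i t = ⨆ j, f j t
    · have hargmax : ∀ j, f j t ≤ f i t := fun j => hi ▸ le_ciSup (hbdd t) j
      have hslope : ∀ᶠ z in 𝓝[>] t, slope (f i) t z < r :=
        (hf i t).hasDerivAt.hasDerivWithinAt.limsup_slope_le' (lt_irrefl t)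
          ((hmax t i hargmax).trans_lt hr)
      filter_upwards [hslope, self_mem_nhdsWithin] with z hz htz
      rwa [slope_lt_iff_lt_add_mul htz, hi] at hz
    · have hlt : f i t < ⨆ j, f j t := (le_ciSup (hbdd t) i).lt_of_ne hi
      filter_upwards [nhdsWithin_le_nhds ((hf i).continuous.continuousAt.eventually_lt_const hlt),
        self_mem_nhdsWithin] with z hz htz
      nlinarith [sub_pos.2 (show t < z from htz)]
  filter_upwards [eventually_all.2 below, self_mem_nhdsWithin] with z hz htz
  obtain ⟨i, hi⟩ := exists_eq_ciSup_of_finite (f := fun j => f j z)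
  rw [slope_lt_iff_lt_add_mul htz, ← hi]
  exact hz i

theorem antitone_ciSup_of_deriv_nonpos_at_argmax (hf : ∀ i, Differentiable ℝ (f i))
    (hmax : ∀ t i, (∀ j, f j t ≤ f i t) → deriv (f i) t ≤ 0) :
    Antitone fun s => ⨆ i, f i s := by
  rcases isEmpty_or_nonempty ι with _ | _
  · simp only [Real.iSup_of_isEmpty]
    exact antitone_const
  · exact antitone_of_frequently_slope_lt (continuous_ciSup fun i => (hf i).continuous)
      fun t r hr => (eventually_slope_ciSup_lt hf hmax hr).frequently

theorem monotone_ciInf_of_deriv_nonneg_at_argmin (hf : ∀ i, Differentiable ℝ (f i))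
    (hmin : ∀ t i, (∀ j, f i t ≤ f j t) → 0 ≤ deriv (f i) t) :
    Monotone fun s => ⨅ i, f i s := by
  have hneg : Antitone fun s => ⨆ i, -f i s :=
    antitone_ciSup_of_deriv_nonpos_at_argmax (f := fun i s => -f i s) (fun i => (hf i).neg)
      fun t i hi => by
        simpa only [deriv.fun_neg, neg_nonpos] using
          hmin t i fun j => neg_le_neg_iff.1 (hi j)
  intro a b hab
  simp only [Real.iInf_eq_neg_iSup_neg]
  exact neg_le_neg (hneg hab)

end FiniteEnvelope

section GeometricMean

variable {ι : Type*} [Fintype ι] {x : ι → ℝ} {i : ι}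

theorem Real.pow_card_rpow_one_div_card (hx : 0 ≤ x i) :
    (x i ^ Fintype.card ι) ^ (1 / Fintype.card ι : ℝ) = x i := by
  have : Nonempty ι := ⟨i⟩
  rw [one_div, Real.pow_rpow_inv_natCast hx Fintype.card_ne_zero]

theorem Real.prod_rpow_one_div_card_le (hx : ∀ j, 0 ≤ x j) (hi : ∀ j, x j ≤ x i) :
    (∏ j, x j) ^ (1 / Fintype.card ι : ℝ) ≤ x i :=
  calc (∏ j, x j) ^ (1 / Fintype.card ι : ℝ)
      ≤ (x i ^ Fintype.card ι) ^ (1 / Fintype.card ι : ℝ) :=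
        Real.rpow_le_rpow (Finset.prod_nonneg fun j _ => hx j)
          ((Finset.prod_le_prod (fun j _ => hx j) fun j _ => hi j).trans_eq
            (Finset.prod_const (x i))) (by positivity)
    _ = x i := Real.pow_card_rpow_one_div_card (hx i)

theorem Real.le_prod_rpow_one_div_card (hx : ∀ j, 0 ≤ x j) (hi : ∀ j, x i ≤ x j) :
    x i ≤ (∏ j, x j) ^ (1 / Fintype.card ι : ℝ) :=
  calc x i = (x i ^ Fintype.card ι) ^ (1 / Fintype.card ι : ℝ) :=
        (Real.pow_card_rpow_one_div_card (hx i)).symm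
    _ ≤ (∏ j, x j) ^ (1 / Fintype.card ι : ℝ) :=
        Real.rpow_le_rpow (pow_nonneg (hx i) _)
          ((Finset.prod_const (x i)).symm.trans_le
            (Finset.prod_le_prod (fun _ _ => hx i) fun j _ => hi j)) (by positivity)

end GeometricMean

theorem consensus_update_gap_antitone_general (M : ℕ)
    (x : Fin M → ℝ → ℝ) (hx : ∀ i, ContDiff ℝ 1 (x i))
    (hpos : ∀ i r, 0 < x i r)
    (c : Fin M → ℝ → ℝ)
    (hcpos : ∀ i r, 0 < c i r)
    (hode : ∀ i r, deriv (x i) r =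
      -(c i r) * Real.log (x i r / (∏ j, x j r) ^ (1 / M : ℝ))) :
    Antitone (fun r => ⨆ i, x i r) ∧
    Monotone (fun r => ⨅ i, x i r) ∧
    Antitone (fun r => (⨆ i, x i r) - ⨅ i, x i r) := by
  have hdiff : ∀ i, Differentiable ℝ (x i) := fun i => (hx i).differentiable one_ne_zero
  have hG : ∀ r, 0 < (∏ j, x j r) ^ (1 / M : ℝ) := fun r =>
    Real.rpow_pos_of_pos (Finset.prod_pos fun j _ => hpos j r) _
  have hsup : Antitone fun r => ⨆ i, x i r := by
    refine antitone_ciSup_of_deriv_nonpos_at_argmax hdiff fun t i hi => ?_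
    have hGle : (∏ j, x j t) ^ (1 / M : ℝ) ≤ x i t := by
      simpa only [Fintype.card_fin] using
        Real.prod_rpow_one_div_card_le (fun j => (hpos j t).le) hi
    rw [hode, neg_mul, neg_nonpos]
    exact mul_nonneg (hcpos i t).le (Real.log_nonneg ((one_le_div (hG t)).2 hGle))
  have hinf : Monotone fun r => ⨅ i, x i r := by
    refine monotone_ciInf_of_deriv_nonneg_at_argmin hdiff fun t i hi => ?_
    have hleG : x i t ≤ (∏ j, x j t) ^ (1 / M : ℝ) := by
      simpa only [Fintype.card_fin] using
        Real.le_prod_rpow_one_div_card (fun j => (hpos j t).le) hi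
    rw [hode, neg_mul, neg_nonneg]
    exact mul_nonpos_of_nonneg_of_nonpos (hcpos i t).le
      (Real.log_nonpos (div_nonneg (hpos i t).le (hG t).le) ((div_le_one (hG t)).2 hleG))
  exact ⟨hsup, hinf, fun a b hab => sub_le_sub (hsup hab) (hinf hab)⟩

/-- Abstract form of the paper's Proposition 6: if each positive quantity `x i`
evolves according to `x i' = -(c i) * log (x i / G)` where `G` is the geometric mean of
the `x j` and `c i > 0`, then the maximum of the `x i` is nonincreasing, the minimum is
nondecreasing, and hence the maximal pairwise gap is nonincreasing. -/
theorem consensus_update_gap_antitone (M : ℕ) (hM : 1 ≤ M)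
    (x : Fin M → ℝ → ℝ) (hx : ∀ i, ContDiff ℝ 1 (x i))
    (hpos : ∀ i r, 0 < x i r)
    (c : Fin M → ℝ → ℝ) (hc : ∀ i, Continuous (c i))
    (hcpos : ∀ i r, 0 < c i r)
    (hode : ∀ i r, deriv (x i) r =
      -(c i r) * Real.log (x i r / (∏ j, x j r) ^ (1 / M : ℝ))) :
    Antitone (fun r => ⨆ i, x i r) ∧
    Monotone (fun r => ⨅ i, x i r) ∧
    Antitone (fun r => (⨆ i, x i r) - ⨅ i, x i r) :=
  consensus_update_gap_antitone_general M x hx hpos c hcpos hode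
end

section
/- Let M ≥ 1 and let x : Fin M → ℝ → ℝ be a family of functions each differentiable at a point r ∈ ℝ. Suppose that for every index i attaining the maximum at r, i.e. every i with x i r = ⨆ j, x j r, the derivative satisfies deriv (x i) r < 0. Then there exists ε > 0 such that for every s with r < s ≤ r + ε, ⨆ j, x j s < ⨆ j, x j r. -/
/-!
Near `r`, an index strictly below the maximum stays below it by continuity, and an index
attaining the maximum drops below it to the right of `r` because its slope is eventually
negative. Finitely many such eventual statements hold simultaneously on a common right
neighbourhood of `r`, where therefore the maximum lies below its value at `r`.
-/

open Filter Topology Set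

theorem HasDerivAt.eventually_nhdsGT_lt_of_neg {f : ℝ → ℝ} {f' r : ℝ} (hf : HasDerivAt f f' r)
    (hf' : f' < 0) : ∀ᶠ s in 𝓝[>] r, f s < f r := by
  filter_upwards [hf.hasDerivWithinAt.limsup_slope_le' (lt_irrefl r) hf', self_mem_nhdsWithin]
    with s hslope (hrs : r < s)
  rw [slope_def_field, div_neg_iff] at hslope
  rcases hslope with ⟨-, hsr⟩ | ⟨hfs, -⟩ <;> linarith

theorem DifferentiableAt.eventually_nhdsGT_lt {f : ℝ → ℝ} {r c : ℝ} (hf : DifferentiableAt ℝ f r)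
    (hle : f r ≤ c) (hneg : f r = c → deriv f r < 0) : ∀ᶠ s in 𝓝[>] r, f s < c := by
  rcases hle.eq_or_lt with heq | hlt
  · subst heq
    exact hf.hasDerivAt.eventually_nhdsGT_lt_of_neg (hneg rfl)
  · exact nhdsWithin_le_nhds (hf.continuousAt.eventually_lt continuousAt_const hlt)

theorem Filter.Eventually.ciSup_lt {ι α β : Type*} [Finite ι] [Nonempty ι]
    [ConditionallyCompleteLinearOrder β] {l : Filter α} {f : ι → α → β} {c : β}
    (h : ∀ i, ∀ᶠ a in l, f i a < c) : ∀ᶠ a in l, ⨆ i, f i a < c := by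
  filter_upwards [eventually_all.2 h] with a ha
  obtain ⟨i, hi⟩ := exists_eq_ciSup_of_finite (f := fun i => f i a)
  exact hi ▸ ha i

theorem exists_pos_forall_of_eventually_nhdsGT {p : ℝ → Prop} {r : ℝ} (h : ∀ᶠ s in 𝓝[>] r, p s) :
    ∃ ε > 0, ∀ s, r < s → s ≤ r + ε → p s := by
  obtain ⟨u, hru, hsub⟩ := mem_nhdsGT_iff_exists_Ioc_subset.1 h
  exact ⟨u - r, sub_pos.2 hru, fun s hrs hsu => hsub ⟨hrs, by linarith⟩⟩

/-- Finite-max descent lemma: if every index attaining the maximum of finitely many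
differentiable functions at `r` has strictly negative derivative there, then the
pointwise maximum strictly decreases on some right-neighborhood of `r`. -/
theorem max_strict_decrease_of_neg_deriv_at_argmax (M : ℕ) (hM : 1 ≤ M)
    (x : Fin M → ℝ → ℝ) (r : ℝ)
    (hdiff : ∀ i, DifferentiableAt ℝ (x i) r)
    (hneg : ∀ i : Fin M, x i r = (⨆ j, x j r) → deriv (x i) r < 0) :
    ∃ ε > 0, ∀ s : ℝ, r < s → s ≤ r + ε → (⨆ j, x j s) < ⨆ j, x j r := by
  have : Nonempty (Fin M) := ⟨⟨0, hM⟩⟩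
  have hbelow : ∀ i, ∀ᶠ s in 𝓝[>] r, x i s < ⨆ j, x j r := fun i =>
    (hdiff i).eventually_nhdsGT_lt (le_ciSup (Finite.bddAbove_range fun j => x j r) i) (hneg i)
  exact exists_pos_forall_of_eventually_nhdsGT (Filter.Eventually.ciSup_lt hbelow)
end
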